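/- arXiv:1507.05317 — 6 statements merged into one kernel-verified Lean document; each statement's English description precedes it below -/
import Mathlib

section
/- Let h = p + εq be a dual quaternion with p ≠ 0 satisfying the Study condition pq̄ + qp̄ = 0. Then for every pure quaternion x the image (p x p̄ + p q̄ − q p̄)/N(p) is again a pure quaternion, and the resulting map on pure quaternions is a bijection that preserves Euclidean distances: for all pure quaternions x, y, the norm of (act of h on x) − (act of h on y) equals the norm of x − y. -/
noncomputable section
open Polynomial

/-- The real quaternions ℍ. -/
abbrev Quat := Quaternion ℝ

/-- The dual quaternions 𝔻ℍ = ℍ ⊕ εℍ, realized as dual numbers over ℍ.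
An element is a pair `(p, q)` representing `p + εq`. -/
abbrev DQ := DualNumber Quat

/-- Conjugation of a dual quaternion `p + εq ↦ p̄ + εq̄`,
conjugating each quaternion part. -/
def dconj (h : DQ) : DQ := (star h.fst, star h.snd)

/-- The canonical ring homomorphism ℝ → 𝔻ℍ. -/
def realToDQ : ℝ →+* DQ := (TrivSqZeroExt.inlHom Quat Quat).comp (algebraMap ℝ Quat)

/-- Coefficientwise conjugate of a polynomial over 𝔻ℍ. -/
def pconj (C : DQ[X]) : DQ[X] := C.sum fun n a => Polynomial.C (dconj a) * X ^ n

/-- `C ∈ 𝔻ℍ[t]` is a motion polynomial if `C C̄ ∈ ℝ[t] \ {0}` and the leading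
coefficient of `C` is invertible. -/
def IsMotionPoly (C : DQ[X]) : Prop :=
  (∃ R : ℝ[X], R ≠ 0 ∧ C * pconj C = R.map realToDQ) ∧ IsUnit C.leadingCoeff

/-- The action of a dual quaternion `p + εq` (with `p ≠ 0` and satisfying the Study
condition) on a pure quaternion `x`:  `x ↦ (p x p̄ + p q̄ − q p̄)/N(p)`. -/
def act (p q x : Quat) : Quat :=
  (p * x * star p + p * star q - q * star p) * (p * star p)⁻¹

/-!
Writing `N = N(p)`, the map is `x ↦ N⁻¹ p x p̄ + N⁻¹ (p q̄ − q p̄)`. Conjugation by `p` multiplies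
real parts and norms by `N`, so `N⁻¹ p x p̄` is a rotation of the pure quaternions, and
`p q̄ − q p̄ = p q̄ − conj (p q̄)` is pure, hence a translation. The inverse motion is the action
of the conjugate `p̄ + ε q̄`.
-/

open Quaternion

lemma Quaternion.re_mul_mul_star (p x : Quat) : (p * x * star p).re = normSq p * x.re := by
  simp only [re_mul, imI_mul, imJ_mul, imK_mul, re_star, imI_star, imJ_star, imK_star,
    normSq_def']
  ring

lemma act_eq_smul (p q x : Quat) :
    act p q x = (normSq p)⁻¹ • (p * x * star p + p * star q - q * star p) := by
  rw [act, self_mul_star, ← coe_inv, mul_coe_eq_smul]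

lemma re_act (p q : Quat) {x : Quat} (hx : x.re = 0) : (act p q x).re = 0 := by
  have hq : q * star p = star (p * star q) := by rw [star_mul, star_star]
  rw [act_eq_smul, re_smul, add_sub_assoc, hq, re_add, re_sub, re_star, re_mul_mul_star, hx]
  simp

lemma act_sub_act (p q x y : Quat) :
    act p q x - act p q y = (normSq p)⁻¹ • (p * (x - y) * star p) := by
  rw [act_eq_smul, act_eq_smul, ← smul_sub]
  congr 1
  noncomm_ring

lemma norm_act_sub_act (q : Quat) {p : Quat} (hp : p ≠ 0) (x y : Quat) :
    ‖act p q x - act p q y‖ = ‖x - y‖ := by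
  have hN : ‖p‖ * ‖p‖ ≠ 0 := by simpa using hp
  rw [act_sub_act, norm_smul, norm_mul, norm_mul, norm_star, Real.norm_eq_abs, abs_inv,
    abs_of_nonneg normSq_nonneg, normSq_eq_norm_mul_self]
  field_simp

lemma act_star_act (q : Quat) {p : Quat} (hp : p ≠ 0) (x : Quat) :
    act (star p) (star q) (act p q x) = x := by
  have hN : normSq p ≠ 0 := normSq_ne_zero.2 hp
  have conj_by_star : star p * (p * x * star p + p * star q - q * star p) * p
      = normSq p • (normSq p • x + star q * p - star p * q) := by
    calc _ = (star p * p) * x * (star p * p) + (star p * p) * (star q * p)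
            - (star p * q) * (star p * p) := by noncomm_ring
      _ = _ := by
        rw [star_mul_self, coe_mul_eq_smul, smul_mul_assoc, mul_coe_eq_smul, coe_mul_eq_smul,
          mul_coe_eq_smul, smul_sub, smul_add]
  rw [act_eq_smul, act_eq_smul, normSq_star, star_star, star_star, mul_smul_comm,
    smul_mul_assoc, conj_by_star]
  match_scalars <;> field_simp <;> ring

def actEquiv (q : Quat) {p : Quat} (hp : p ≠ 0) :
    {x : Quat // x.re = 0} ≃ {x : Quat // x.re = 0} where
  toFun x := ⟨act p q x, re_act p q x.2⟩
  invFun x := ⟨act (star p) (star q) x, re_act _ _ x.2⟩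
  left_inv x := Subtype.ext (act_star_act q hp x)
  right_inv x := Subtype.ext <| by
    simpa using act_star_act (star q) (star_ne_zero.2 hp) (x : Quat)

theorem stmt1_general (p q : Quat) (hp : p ≠ 0) :
    (∀ x : Quat, x.re = 0 → (act p q x).re = 0) ∧
    (∃ f : {x : Quat // x.re = 0} ≃ {x : Quat // x.re = 0},
      ∀ x : {x : Quat // x.re = 0}, (f x : Quat) = act p q (x : Quat)) ∧
    (∀ x y : Quat, x.re = 0 → y.re = 0 → ‖act p q x - act p q y‖ = ‖x - y‖) :=
  ⟨fun _ hx => re_act p q hx, ⟨actEquiv q hp, fun _ => rfl⟩,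
    fun x y _ _ => norm_act_sub_act q hp x y⟩

/-- The action of a dual quaternion with nonzero primal part satisfying
the Study condition maps pure quaternions to pure quaternions, is a bijection of the
pure quaternions, and preserves Euclidean distances. -/
theorem stmt1 (p q : Quat) (hp : p ≠ 0) (hs : p * star q + q * star p = 0) :
    (∀ x : Quat, x.re = 0 → (act p q x).re = 0) ∧
    (∃ f : {x : Quat // x.re = 0} ≃ {x : Quat // x.re = 0},
      ∀ x : {x : Quat // x.re = 0}, (f x : Quat) = act p q (x : Quat)) ∧
    (∀ x y : Quat, x.re = 0 → y.re = 0 → ‖act p q x - act p q y‖ = ‖x - y‖) :=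
  stmt1_general p q hp
end
end

section
/- Let h = p + εq be a dual quaternion with p ≠ 0 satisfying the Study condition pq̄ + qp̄ = 0. The action of h on pure quaternions is the identity map (i.e., (p x p̄ + p q̄ − q p̄)/N(p) = x for all pure quaternions x) if and only if q = 0 and p is a nonzero real number. In other words, the kernel of the action homomorphism is the multiplicative group of nonzero reals. -/
/-!
At `x = 0` the action is the pure translation `(p q̄ − q p̄)/N(p)`, so a trivial action
forces `p q̄ = q p̄`; together with the Study condition `p q̄ = −q p̄` this gives `p q̄ = 0`,
hence `q = 0`. With `q = 0` the action is conjugation `x ↦ p x p⁻¹`, which fixes every pure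
quaternion only if `p` commutes with `i` and `j`, i.e. is real.
-/

noncomputable section
open Polynomial

open scoped Quaternion

instance Quaternion.instCharZero {R : Type*} [CommRing R] [CharZero R] : CharZero ℍ[R] :=
  charZero_of_injective_algebraMap Quaternion.coe_injective

/-- Commuting with `i` and `j` already kills all three imaginary components. -/
theorem Quaternion.eq_coe_re_of_forall_re_eq_zero_commute {R : Type*} [CommRing R]
    [NoZeroDivisors R] [CharZero R] {p : ℍ[R]} (h : ∀ x : ℍ[R], x.re = 0 → Commute p x) :
    p = p.re := by
  obtain ⟨i, hi⟩ : ∃ i : ℍ[R], i.re = 0 ∧ i.imI = 1 ∧ i.imJ = 0 ∧ i.imK = 0 :=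
    ⟨⟨0, 1, 0, 0⟩, rfl, rfl, rfl, rfl⟩
  obtain ⟨j, hj⟩ : ∃ j : ℍ[R], j.re = 0 ∧ j.imI = 0 ∧ j.imJ = 1 ∧ j.imK = 0 :=
    ⟨⟨0, 0, 1, 0⟩, rfl, rfl, rfl, rfl⟩
  have hpi := (h i hi.1).eq
  have hpj := (h j hj.1).eq
  simp only [Quaternion.ext_iff, Quaternion.re_mul, Quaternion.imI_mul, Quaternion.imJ_mul,
    Quaternion.imK_mul, hi, hj] at hpi hpj
  ext <;> simp only [Quaternion.re_coe, Quaternion.imI_coe, Quaternion.imJ_coe,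
    Quaternion.imK_coe]
  all_goals refine (mul_eq_zero.1 ?_).resolve_left (two_ne_zero' R)
  · linear_combination hpj.2.2.2
  · linear_combination -hpi.2.2.2
  · linear_combination hpi.2.2.1

theorem eq_zero_of_mul_star_add_eq_zero_of_mul_star_sub_eq_zero {A : Type*} [Ring A]
    [StarRing A] [NoZeroDivisors A] [CharZero A] {p q : A} (hp : p ≠ 0)
    (hs : p * star q + q * star p = 0) (ha : p * star q - q * star p = 0) : q = 0 := by
  have h2 : 2 * (p * star q) = 0 := by rw [two_mul]; nth_rw 2 [sub_eq_zero.1 ha]; exact hs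
  simpa [hp] using h2

theorem act_dual_zero (p x : Quat) : act p 0 x = p * x * p⁻¹ := by
  rw [act, star_zero, mul_zero, zero_mul, add_zero, sub_zero, mul_inv_rev, mul_assoc _ (star p),
    ← mul_assoc (star p)]
  rcases eq_or_ne p 0 with rfl | hp
  · simp
  · rw [mul_inv_cancel₀ (star_ne_zero.2 hp), one_mul]

theorem act_dual_zero_eq_self_iff_commute {p : Quat} (hp : p ≠ 0) (x : Quat) :
    act p 0 x = x ↔ Commute p x := by
  rw [act_dual_zero, mul_inv_eq_iff_eq_mul₀ hp]
  rfl

/-- The action of `p + εq` on pure quaternions is the identity iff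
`q = 0` and `p` is a nonzero real number: the kernel of the action homomorphism
is the multiplicative group ℝ*. -/
theorem stmt2 (p q : Quat) (hp : p ≠ 0) (hs : p * star q + q * star p = 0) :
    (∀ x : Quat, x.re = 0 → act p q x = x) ↔
      (q = 0 ∧ ∃ r : ℝ, r ≠ 0 ∧ p = (r : Quat)) := by
  constructor
  · intro h
    obtain rfl : q = 0 := eq_zero_of_mul_star_add_eq_zero_of_mul_star_sub_eq_zero hp hs
      (by simpa [act, hp] using h 0 rfl)
    have hre : p = p.re := Quaternion.eq_coe_re_of_forall_re_eq_zero_commute fun x hx =>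
      (act_dual_zero_eq_self_iff_commute hp x).1 (h x hx)
    refine ⟨rfl, p.re, fun h0 => hp ?_, hre⟩
    rw [hre, h0, Quaternion.coe_zero]
  · rintro ⟨rfl, r, hr, rfl⟩ x -
    have hr' : (r : Quat) ≠ 0 := by rwa [Ne, ← Quaternion.coe_zero, Quaternion.coe_inj]
    exact (act_dual_zero_eq_self_iff_commute hr' x).2 (Quaternion.coe_commute r x)
end
end

section
/- Every orientation-preserving rigid motion of ℝ³ arises from a dual quaternion: for every ℝ-linear isometry ρ of the three-dimensional real vector space of pure quaternions whose determinant equals 1, and for every pure quaternion b, there exist quaternions p, q with p ≠ 0 and pq̄ + qp̄ = 0 such that for every pure quaternion x one has (p x p̄ + p q̄ − q p̄)/N(p) = ρ(x) + b. In other words, the action homomorphism is surjective onto the group of Euclidean displacements. -/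
noncomputable section
open Polynomial

/-- The three-dimensional real vector space of pure quaternions, identified with ℝ³. -/
def PureQ : Submodule ℝ Quat where
  carrier := {x | x.re = 0}
  add_mem' := by intro a b ha hb; simp_all [Set.mem_setOf_eq]
  zero_mem' := by simp; rfl
  smul_mem' := by intro c x hx; simp_all [Set.mem_setOf_eq]

open scoped RealInnerProductSpace
open Submodule

/-! A reflection of the pure quaternions in the plane orthogonal to a unit vector `u` is
`x ↦ u x u = -u x ū`. By Cartan–Dieudonné every linear isometry is a product of such reflections,
hence of the form `x ↦ det • w x w̄` with `w` a unit quaternion, and `w` itself realizes a rotation.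
The translation by `b` is then added through the dual part `q = -b w / 2` of `(1 - ε b / 2) w`. -/

lemma mul_mul_self_eq_of_re_eq_zero {v x : Quat} (hv : v.re = 0) (hx : x.re = 0) :
    v * x * v = Quaternion.normSq v • x - (2 * ⟪v, x⟫) • v := by
  rw [Quaternion.inner_def]
  ext <;> simp [Quaternion.normSq_def', hv, hx] <;> ring

lemma coe_reflection_orthogonal_singleton {u : PureQ} (hu : ‖u‖ = 1) (y : PureQ) :
    (reflection (ℝ ∙ u)ᗮ y : Quat) = -((u : Quat) * y * star (u : Quat)) := by
  have hnormSq : Quaternion.normSq (u : Quat) = 1 := by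
    rw [Quaternion.normSq_eq_norm_mul_self]; simp [norm_coe, hu]
  rw [reflection_orthogonal_apply, reflection_singleton_apply, Quaternion.star_eq_neg.mpr u.2,
    mul_neg, neg_neg, mul_mul_self_eq_of_re_eq_zero u.2 y.2, hnormSq, hu]
  push_cast [Submodule.coe_inner]
  module

def IsSignedUnitConj (φ : PureQ ≃ₗᵢ[ℝ] PureQ) : Prop :=
  ∃ w : Quat, w * star w = 1 ∧ ∀ x : PureQ,
    (φ x : Quat) = LinearMap.det (φ.toLinearEquiv : PureQ →ₗ[ℝ] PureQ) • (w * x * star w)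

lemma isSignedUnitConj_one : IsSignedUnitConj 1 := by
  have hdet : LinearMap.det ((1 : PureQ ≃ₗᵢ[ℝ] PureQ).toLinearEquiv : PureQ →ₗ[ℝ] PureQ) = 1 :=
    LinearMap.det_id
  exact ⟨1, by simp, fun x => by simp [hdet]⟩

lemma IsSignedUnitConj.mul {φ ψ : PureQ ≃ₗᵢ[ℝ] PureQ} (hφ : IsSignedUnitConj φ)
    (hψ : IsSignedUnitConj ψ) : IsSignedUnitConj (φ * ψ) := by
  obtain ⟨w, hw, hφw⟩ := hφ
  obtain ⟨v, hv, hψv⟩ := hψ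
  have hdet : LinearMap.det ((φ * ψ).toLinearEquiv : PureQ →ₗ[ℝ] PureQ) =
      LinearMap.det (φ.toLinearEquiv : PureQ →ₗ[ℝ] PureQ) *
        LinearMap.det (ψ.toLinearEquiv : PureQ →ₗ[ℝ] PureQ) :=
    LinearMap.det_comp _ _
  refine ⟨w * v, ?_, fun x => ?_⟩
  · rw [star_mul, mul_assoc, ← mul_assoc v, hv, one_mul, hw]
  · rw [LinearIsometryEquiv.coe_mul, Function.comp_apply, hφw, hψv, hdet, star_mul, mul_smul]
    simp only [mul_smul_comm, smul_mul_assoc, mul_assoc]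

lemma isSignedUnitConj_reflection (v : PureQ) : IsSignedUnitConj (reflection (ℝ ∙ v)ᗮ) := by
  by_cases hv : v = 0
  · have hid : reflection (ℝ ∙ v)ᗮ = 1 :=
      LinearIsometryEquiv.ext fun x => reflection_mem_subspace_eq_self (by simp [hv])
    rw [hid]
    exact isSignedUnitConj_one
  set u : PureQ := ‖v‖⁻¹ • v
  have hu : ‖u‖ = 1 := norm_smul_inv_norm hv
  have hu0 : u ≠ 0 := norm_ne_zero_iff.mp (by simp [hu])
  have hspan : (ℝ ∙ v) = ℝ ∙ u :=
    (span_singleton_smul_eq (inv_ne_zero (norm_ne_zero_iff.mpr hv)).isUnit v).symm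
  -- `rw` cannot: the instance `HasOrthogonalProjection` depends on the subspace
  simp only [hspan]
  refine ⟨u, ?_, fun x => ?_⟩
  · rw [Quaternion.self_mul_star, Quaternion.normSq_eq_norm_mul_self]
    simp [norm_coe, hu]
  · rw [det_reflection, orthogonal_orthogonal, finrank_span_singleton hu0,
      coe_reflection_orthogonal_singleton hu]
    simp

lemma LinearIsometryEquiv.isSignedUnitConj (φ : PureQ ≃ₗᵢ[ℝ] PureQ) : IsSignedUnitConj φ := by
  obtain ⟨l, -, rfl⟩ := φ.reflections_generate_dim
  refine List.prod_induction _ (fun _ _ => IsSignedUnitConj.mul) isSignedUnitConj_one ?_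
  simp only [List.mem_map]
  rintro _ ⟨v, -, rfl⟩
  exact isSignedUnitConj_reflection v

lemma exists_unit_conj_of_det_eq_one (ρ : PureQ →ₗ[ℝ] PureQ) (hiso : ∀ x, ‖ρ x‖ = ‖x‖)
    (hdet : LinearMap.det ρ = 1) :
    ∃ w : Quat, w * star w = 1 ∧ ∀ x : PureQ, (ρ x : Quat) = w * x * star w := by
  let φ : PureQ ≃ₗᵢ[ℝ] PureQ := LinearIsometry.toLinearIsometryEquiv ⟨ρ, hiso⟩ rfl
  obtain ⟨w, hw, hφw⟩ := φ.isSignedUnitConj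
  have hφ : (φ.toLinearEquiv : PureQ →ₗ[ℝ] PureQ) = ρ := rfl
  exact ⟨w, hw, fun x => (hφw x).trans (by rw [hφ, hdet, one_smul])⟩

lemma study_condition_smul_mul_of_re_eq_zero (w : Quat) {b : Quat} (hb : b.re = 0) (c : ℝ) :
    w * star (c • (b * w)) + c • (b * w) * star w = 0 := by
  rw [Quaternion.star_smul, star_mul, Quaternion.star_eq_neg.mpr hb, mul_smul_comm,
    smul_mul_assoc, ← mul_assoc, mul_assoc b, Quaternion.self_mul_star, mul_neg,
    Quaternion.coe_commutes, smul_neg, neg_add_cancel]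

lemma act_neg_half_smul_mul {w b : Quat} (hw : w * star w = 1) (hb : b.re = 0) (x : Quat) :
    act w (-(2⁻¹ : ℝ) • (b * w)) x = w * x * star w + b := by
  have hstar : w * star (-(2⁻¹ : ℝ) • (b * w)) = (2⁻¹ : ℝ) • b := by
    rw [Quaternion.star_smul, star_mul, Quaternion.star_eq_neg.mpr hb, mul_smul_comm,
      ← mul_assoc, hw, one_mul, neg_smul_neg]
  have hmul : -(2⁻¹ : ℝ) • (b * w) * star w = -(2⁻¹ : ℝ) • b := by
    rw [smul_mul_assoc, mul_assoc, hw, mul_one]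
  rw [act, hw, inv_one, mul_one, hstar, hmul, add_sub_assoc, ← sub_smul]
  norm_num

/-- Surjectivity of the action homomorphism onto the Euclidean
displacements: every orientation-preserving rigid motion `x ↦ ρ(x) + b` of the
pure quaternions (ρ a linear isometry of determinant 1, b a pure quaternion)
is the action of some dual quaternion `p + εq` with `p ≠ 0` satisfying the
Study condition. -/
theorem stmt3 (ρ : PureQ →ₗ[ℝ] PureQ) (hiso : ∀ x : PureQ, ‖ρ x‖ = ‖x‖)
    (hdet : LinearMap.det ρ = 1) (b : PureQ) :
    ∃ p q : Quat, p ≠ 0 ∧ p * star q + q * star p = 0 ∧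
      ∀ x : PureQ, act p q (x : Quat) = (ρ x : Quat) + (b : Quat) := by
  obtain ⟨w, hw, hρ⟩ := exists_unit_conj_of_det_eq_one ρ hiso hdet
  refine ⟨w, -(2⁻¹ : ℝ) • ((b : Quat) * w), left_ne_zero_of_mul_eq_one hw,
    study_condition_smul_mul_of_re_eq_zero w b.2 _, fun x => ?_⟩
  rw [act_neg_half_smul_mul hw b.2, hρ]
end
end

section
/- Let h = p + εq be a dual quaternion such that t − h is a monic linear motion polynomial (i.e., q is pure and pq̄ + qp̄ = 0) and such that p is not real (the vector part of p is nonzero). Then there exist a pure quaternion x₀ and a nonzero pure quaternion d such that for every real number t₀ and every real s, the action of the dual quaternion (t₀ − p) − εq fixes the point x₀ + s·d; i.e., t − h parametrizes a rotation about a fixed axis in ℝ³. -/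
noncomputable section
open Polynomial

/-!
Write `v` for the vector part of `p`. For pure `q` the Study condition says exactly that `v` and
`q` anticommute. For `P = t₀ - p` this gives `P q + q P̄ = 2 P q`, and as `P P̄` is real,
`P x P̄ - P P̄ x = P (P.im x - x P.im)`. Hence the fixed-point equation
`P x P̄ + P q + q P̄ = P P̄ x` becomes `v x - x v = 2 q`, whatever `t₀` is, and the line
`v⁻¹ q + ℝ v` solves it.
-/
open Quaternion

section Anticommute

variable {D : Type*} [DivisionRing D] {v q : D}

lemma inv_mul_eq_neg_mul_inv_of_mul_eq_neg (h : v * q = -(q * v)) : v⁻¹ * q = -(q * v⁻¹) := by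
  rcases eq_or_ne v 0 with rfl | hv
  · simp
  calc v⁻¹ * q = v⁻¹ * (q * v) * v⁻¹ := by rw [mul_assoc, mul_inv_cancel_right₀ hv]
    _ = v⁻¹ * -(v * q) * v⁻¹ := by rw [h, neg_neg]
    _ = -(q * v⁻¹) := by rw [mul_neg, inv_mul_cancel_left₀ hv, neg_mul]

lemma mul_sub_mul_inv_mul_add_smul_of_mul_eq_neg {K : Type*} [CommSemiring K] [Algebra K D]
    (hv : v ≠ 0) (h : v * q = -(q * v)) (s : K) :
    v * (v⁻¹ * q + s • v) - (v⁻¹ * q + s • v) * v = 2 * q := by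
  rw [mul_add, add_mul, smul_mul_assoc, mul_smul_comm, add_sub_add_right_eq_sub,
    mul_inv_cancel_left₀ hv, mul_assoc, neg_eq_iff_eq_neg.1 h.symm, mul_neg,
    inv_mul_cancel_left₀ hv, sub_neg_eq_add, two_mul]

end Anticommute

namespace Quaternion

section CommRing

variable {R : Type*} [CommRing R]

lemma mul_star_add_mul_star_of_star_eq_neg (p : Quaternion R) {q : Quaternion R}
    (hq : star q = -q) : p * star q + q * star p = -(p.im * q + q * p.im) := by
  rw [hq]
  nth_rw 1 [← re_add_im p]
  rw [← re_add_im (star p), im_star, re_star, add_mul, mul_add, coe_mul_eq_smul,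
    mul_coe_eq_smul, mul_neg, mul_neg, smul_neg, neg_add]
  abel

lemma mul_mul_star_sub_mul_mul_star (P x : Quaternion R) :
    P * x * star P - x * (P * star P) = P * (P.im * x - x * P.im) := by
  calc P * x * star P - x * (P * star P) = P * (x * star P - star P * x) := by
        rw [self_mul_star, ← coe_commutes, ← self_mul_star]; noncomm_ring
    _ = P * (P.im * x - x * P.im) := by
        congr 1
        rw [← re_add_im (star P), im_star, re_star, mul_add, add_mul, mul_coe_eq_smul,
          coe_mul_eq_smul, mul_neg, neg_mul]
        abel

lemma mul_star_eq_mul_of_im_mul_eq_neg {P q : Quaternion R} (h : P.im * q = -(q * P.im)) :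
    q * star P = P * q := by
  nth_rw 2 [← re_add_im P]
  rw [← re_add_im (star P), im_star, re_star, mul_add, add_mul, mul_coe_eq_smul,
    coe_mul_eq_smul, mul_neg, h]

end CommRing

lemma re_inv_mul_eq_zero {R : Type*} [Field R] [LinearOrder R] [IsStrictOrderedRing R]
    {v q : Quaternion R} (hv : star v = -v) (hq : star q = -q) (h : v * q = -(q * v)) :
    (v⁻¹ * q).re = 0 := by
  rw [← star_eq_neg, star_mul, star_inv₀, hv, hq, inv_neg, neg_mul_neg,
    inv_mul_eq_neg_mul_inv_of_mul_eq_neg h, neg_neg]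

end Quaternion

lemma act_neg_eq_self_iff {P q x : Quat} (hP : P ≠ 0) (hq : star q = -q)
    (h : P.im * q = -(q * P.im)) : act P (-q) x = x ↔ x * P.im - P.im * x = 2 * q := by
  have hN : P * star P ≠ 0 := mul_ne_zero hP (star_ne_zero.2 hP)
  have key : P * x * star P + P * star (-q) - -q * star P - x * (P * star P) =
      P * (P.im * x - x * P.im + 2 * q) := by
    rw [star_neg, hq, neg_neg, neg_mul, sub_neg_eq_add, mul_star_eq_mul_of_im_mul_eq_neg h,
      mul_add, ← mul_mul_star_sub_mul_mul_star, two_mul, mul_add]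
    abel
  have hcomm : P.im * x - x * P.im + 2 * q = 2 * q - (x * P.im - P.im * x) := by abel
  rw [act, mul_inv_eq_iff_eq_mul₀ hN, ← sub_eq_zero, key, mul_eq_zero, or_iff_right hP, hcomm,
    sub_eq_zero, eq_comm]

/-- If `t − h`, `h = p + εq`, is a monic linear motion polynomial
(`q` pure, Study condition) and `p` is not real, then there is a fixed axis
`{x₀ + s·d : s ∈ ℝ}` of pure quaternions (with `d ≠ 0`) each of whose points is
fixed by the action of `(t₀ − p) − εq` for every real parameter value `t₀`;
i.e. `t − h` parametrizes a rotation about a fixed axis in ℝ³. -/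
theorem stmt6 (p q : Quat) (hq : q + star q = 0) (hs : p * star q + q * star p = 0)
    (hp : p.im ≠ 0) :
    ∃ x₀ d : Quat, x₀.re = 0 ∧ d.re = 0 ∧ d ≠ 0 ∧
      ∀ t₀ s : ℝ, act ((t₀ : Quat) - p) (-q) (x₀ + s • d) = x₀ + s • d := by
  have hq' : star q = -q := eq_neg_of_add_eq_zero_right hq
  have hpq : p.im * q = -(q * p.im) := by
    rw [mul_star_add_mul_star_of_star_eq_neg p hq', neg_eq_zero] at hs
    exact eq_neg_of_add_eq_zero_left hs
  refine ⟨p.im⁻¹ * q, p.im, re_inv_mul_eq_zero (star_im p) hq' hpq, re_im p, hp, fun t₀ s => ?_⟩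
  have hP : ((t₀ : Quat) - p).im = -p.im := by simp
  have hP0 : (t₀ : Quat) - p ≠ 0 := fun h => hp (by simpa [h] using hP)
  rw [act_neg_eq_self_iff hP0 hq' (by rw [hP, neg_mul, mul_neg, hpq]), hP, mul_neg, neg_mul,
    sub_neg_eq_add, neg_add_eq_sub]
  exact mul_sub_mul_inv_mul_add_smul_of_mul_eq_neg hp hpq s
end
end

section
/- Every monic polynomial C ∈ ℍ[t] of degree n over the real quaternions admits a factorization C = (t − q₁)(t − q₂)⋯(t − qₙ) into monic linear factors with quaternions q₁, …, qₙ ∈ ℍ. -/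
/-!
The product `p * star p` of `p ∈ ℍ[t]` with its coefficientwise conjugate has real coefficients,
so by the fundamental theorem of algebra it has a root `w ∈ ℂ ⊆ ℍ`. In `ℍ[t]` evaluation obeys
`(f * g)(w) = f(c w c⁻¹) * c` with `c = g(w)`, so either `p` has the right root `c w c⁻¹`, or
`star p` vanishes at `w` and conjugating `star p = d * (t - w)` splits off the left factor
`t - star w` from `p`. Peeling off one monic linear factor at a time, on the right or on the left,
factors every monic polynomial completely.
-/

noncomputable section
open Polynomial

namespace Polynomial

section Star

variable {R : Type*} [Semiring R] [StarRing R]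

def starRingHom : R[X] →+* R[X]ᵐᵒᵖ :=
  (opRingEquiv R).symm.toRingHom.comp (mapRingHom (starRingEquiv : R ≃+* Rᵐᵒᵖ).toRingHom)

instance : Star R[X] := ⟨fun p => MulOpposite.unop (starRingHom p)⟩

theorem star_def (p : R[X]) : star p = MulOpposite.unop (starRingHom p) := rfl

@[simp]
theorem coeff_star (p : R[X]) (n : ℕ) : (star p).coeff n = star (p.coeff n) := by
  simpa [star_def, starRingHom] using
    congr_arg MulOpposite.unop (coeff_opRingEquiv (starRingHom p) n).symm

instance : StarRing R[X] where
  star_involutive p := ext fun n => by simp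
  star_mul p q := by simp [star_def]
  star_add p q := by simp [star_def]

@[simp]
theorem star_C (a : R) : star (C a) = C (star a) := by
  simp [star_def, starRingHom]

@[simp]
theorem star_X : star (X : R[X]) = X := by
  simp [star_def, starRingHom]

end Star

section Ring

variable {R : Type*} [Ring R]

theorem exists_eq_mul_X_sub_C_add_C_eval (p : R[X]) (x : R) :
    ∃ d, p = d * (X - C x) + C (p.eval x) := by
  induction p using Polynomial.induction_on' with
  | add f g hf hg =>
      obtain ⟨df, hdf⟩ := hf
      obtain ⟨dg, hdg⟩ := hg
      refine ⟨df + dg, ?_⟩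
      conv_lhs => rw [hdf, hdg]
      rw [eval_add, C_add]
      noncomm_ring
  | monomial n a =>
      refine ⟨C a * ∑ i ∈ Finset.range n, X ^ i * C x ^ (n - 1 - i), ?_⟩
      rw [mul_assoc, (commute_X (C x)).geom_sum₂_mul, eval_monomial, ← C_mul_X_pow_eq_monomial,
        mul_sub, ← map_pow, ← map_mul]
      noncomm_ring

theorem exists_eq_mul_X_sub_C_of_isRoot {p : R[X]} {x : R} (h : p.IsRoot x) :
    ∃ d, p = d * (X - C x) := by
  obtain ⟨d, hd⟩ := exists_eq_mul_X_sub_C_add_C_eval p x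
  exact ⟨d, by rwa [h.eq_zero, C_0, add_zero] at hd⟩

theorem eval_mul_eq_sum (p q : R[X]) (x : R) :
    (p * q).eval x = p.sum fun i a => a * q.eval x * x ^ i := by
  induction p using Polynomial.induction_on' with
  | add f g hf hg =>
      rw [add_mul, eval_add, hf, hg, sum_add_index _ _ _ (by simp) (by intros; simp [add_mul])]
  | monomial n a =>
      rw [sum_monomial_index _ _ (by simp), ← C_mul_X_pow_eq_monomial, mul_assoc, X_pow_mul,
        ← mul_assoc, eval_mul_X_pow, eval_C_mul, mul_assoc]

end Ring

theorem eval_mul_eq_eval_conj_mul {D : Type*} [DivisionRing D] (p q : D[X]) {x : D}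
    (hq : q.eval x ≠ 0) :
    (p * q).eval x = p.eval (q.eval x * x * (q.eval x)⁻¹) * q.eval x := by
  have hconj (i : ℕ) : (q.eval x * x * (q.eval x)⁻¹) ^ i = q.eval x * x ^ i * (q.eval x)⁻¹ := by
    simpa using GroupWithZero.conj_pow₀ (s := i) (d := x) (inv_ne_zero hq)
  rw [eval_mul_eq_sum, eval_eq_sum (x := _ * x * _), Polynomial.sum, Polynomial.sum,
    Finset.sum_mul]
  refine Finset.sum_congr rfl fun i _ => ?_
  rw [hconj]
  simp only [mul_assoc, inv_mul_cancel₀ hq, mul_one]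

theorem exists_isRoot_or_isRoot_of_isRoot_mul {D : Type*} [DivisionRing D] {p q : D[X]} {x : D}
    (h : (p * q).IsRoot x) : ∃ y, p.IsRoot y ∨ q.IsRoot y := by
  by_cases hq : q.IsRoot x
  · exact ⟨x, .inr hq⟩
  · refine ⟨q.eval x * x * (q.eval x)⁻¹, .inl ?_⟩
    have := eval_mul_eq_eval_conj_mul p q hq
    rw [h.eq_zero, eq_comm, mul_eq_zero] at this
    exact this.resolve_right hq

end Polynomial

namespace Quaternion

theorem exists_eq_map_of_isSelfAdjoint {p : Quat[X]} (hp : IsSelfAdjoint p) :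
    ∃ p₀ : ℝ[X], p = p₀.map (algebraMap ℝ Quat) := by
  have hcoeff (n : ℕ) : p.coeff n ∈ Set.range (algebraMap ℝ Quat) := by
    have : star (p.coeff n) = p.coeff n := by rw [← coeff_star, hp.star_eq]
    exact ⟨_, (Quaternion.star_eq_self.mp this).symm⟩
  exact (mem_lifts p).mp ((lifts_iff_coeff_lifts p).mpr hcoeff) |>.imp fun _ h => h.symm

theorem exists_aeval_eq_zero {p : ℝ[X]} (hp : 0 < p.natDegree) : ∃ w : Quat, aeval w p = 0 := by
  obtain ⟨z, hz⟩ := IsAlgClosed.exists_root (p.map (algebraMap ℝ ℂ))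
    (by rw [degree_map]; exact (natDegree_pos_iff_degree_pos.mp hp).ne')
  refine ⟨ofComplex z, ?_⟩
  rw [aeval_algHom_apply, aeval_def, ← eval_map, hz.eq_zero, map_zero]

theorem exists_isRoot_or_isRoot_star {p : Quat[X]} (hp : 0 < p.natDegree) :
    ∃ x, p.IsRoot x ∨ (star p).IsRoot x := by
  have hp0 : p ≠ 0 := ne_zero_of_natDegree_gt hp
  obtain ⟨p₀, hp₀⟩ := exists_eq_map_of_isSelfAdjoint (IsSelfAdjoint.mul_star_self p)
  have hdeg : 0 < p₀.natDegree := by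
    calc 0 < (p * star p).natDegree := by
          rw [natDegree_mul hp0 (star_ne_zero.mpr hp0)]; omega
      _ ≤ p₀.natDegree := hp₀ ▸ natDegree_map_le
  obtain ⟨w, hw⟩ := exists_aeval_eq_zero hdeg
  refine exists_isRoot_or_isRoot_of_isRoot_mul (x := w) ?_
  rw [IsRoot, hp₀, eval_map_algebraMap, hw]

theorem exists_eq_mul_X_sub_C_or_eq_X_sub_C_mul {p : Quat[X]} (hp : 0 < p.natDegree) :
    ∃ x d, p = d * (X - C x) ∨ p = (X - C x) * d := by
  obtain ⟨x, hx | hx⟩ := exists_isRoot_or_isRoot_star hp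
  · obtain ⟨d, hd⟩ := exists_eq_mul_X_sub_C_of_isRoot hx
    exact ⟨x, d, .inl hd⟩
  · obtain ⟨d, hd⟩ := exists_eq_mul_X_sub_C_of_isRoot hx
    refine ⟨star x, star d, .inr ?_⟩
    simpa using congr_arg star hd

theorem exists_monic_eq_mul_X_sub_C_or_eq_X_sub_C_mul {p : Quat[X]} (hm : p.Monic)
    {m : ℕ} (hdeg : p.natDegree = m + 1) :
    ∃ x d, d.Monic ∧ d.natDegree = m ∧ (p = d * (X - C x) ∨ p = (X - C x) * d) := by
  obtain ⟨x, d, h⟩ := exists_eq_mul_X_sub_C_or_eq_X_sub_C_mul (p := p) (by omega)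
  rcases h with h | h
  · have hd : d.Monic := (monic_X_sub_C x).of_mul_monic_right (h ▸ hm)
    have := hd.natDegree_mul (monic_X_sub_C x)
    rw [← h, hdeg, natDegree_X_sub_C] at this
    exact ⟨x, d, hd, by omega, .inl h⟩
  · have hd : d.Monic := (monic_X_sub_C x).of_mul_monic_left (h ▸ hm)
    have := (monic_X_sub_C x).natDegree_mul hd
    rw [← h, hdeg, natDegree_X_sub_C] at this
    exact ⟨x, d, hd, by omega, .inr h⟩

end Quaternion

/-- Every monic polynomial of degree n over the quaternions admits a
factorization into monic linear factors `(t − q₁)(t − q₂)⋯(t − qₙ)` (ordered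
product, since ℍ[t] is noncommutative). -/
theorem stmt7 (n : ℕ) (C : Quat[X]) (hmonic : C.Monic) (hdeg : C.natDegree = n) :
    ∃ q : Fin n → Quat,
      C = (List.ofFn fun i => X - Polynomial.C (q i)).prod := by
  induction n generalizing C with
  | zero => exact ⟨Fin.elim0, by simpa using hmonic.natDegree_eq_zero.mp hdeg⟩
  | succ m ih =>
      obtain ⟨x, d, hd, hdeg, hright | hleft⟩ :=
        Quaternion.exists_monic_eq_mul_X_sub_C_or_eq_X_sub_C_mul hmonic hdeg
      all_goals obtain ⟨q, hq⟩ := ih d hd hdeg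
      · refine ⟨Fin.snoc q x, ?_⟩
        rw [List.ofFn_succ', List.prod_concat]
        simp only [Fin.snoc_castSucc, Fin.snoc_last, ← hq, hright]
      · refine ⟨Fin.cons x q, ?_⟩
        rw [List.ofFn_succ, List.prod_cons]
        simp only [Fin.cons_zero, Fin.cons_succ, ← hq, hleft]
end
end

section
/- Let C = P + εQ ∈ 𝔻ℍ[t] be a monic quadratic motion polynomial whose primal part P is divisible by no nonconstant real polynomial, and suppose its norm polynomial factors as C·C̄ = M₁·M₂ with M₁ ≠ M₂ monic irreducible real quadratic polynomials. Then there are exactly two ordered pairs (h₁, h₂) of dual quaternions with C = (t − h₁)(t − h₂) such that both t − h₁ and t − h₂ are motion polynomials; one pair satisfies (t − h₁)(t − h̄₁) = M₁ and the other satisfies (t − h₁)(t − h̄₁) = M₂. -/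
/-!
Write `C = M + (a t + b)`, where `M` is the prospective norm polynomial of the right factor.
Real polynomials are central, so `C C̄ = M M'` gives `M (M + L + L̄) + L L̄ = M M'` for
`L = a t + b`; hence `M` divides `L L̄`, which has degree at most two, and `L L̄ = a ā M`.
A right factor `t - h` with norm `M` is a right root of `M`, hence of `C` exactly when
`a h + b = 0`. The primal part of `a` cannot vanish, for then that of `b` would too and `M`
would divide the primal part of `C`; so `a` is invertible and `h = -a⁻¹ b` is the only
candidate, and the relations read off from `L L̄ = a ā M` say that its norm is `M`.
Taking `M = M₂` and `M = M₁` gives the two factorizations; irreducibility of `M₁` shows that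
the norm of the right factor of any factorization is `M₁` or `M₂`.
-/

noncomputable section
open Polynomial

/-- The dual quaternion `p + εq` from its primal part `p` and dual part `q`. -/
def dq (p q : Quat) : DQ := (p, q)

/-- The primal part of a polynomial over 𝔻ℍ: take the primal part of each
coefficient, giving a polynomial over ℍ. -/
def primal (C : DQ[X]) : Quat[X] :=
  C.map (TrivSqZeroExt.fstHom ℝ Quat Quat).toRingHom

/-- `P ∈ ℍ[t]` is divisible by no nonconstant real polynomial. -/
def NoRealFactor (P : Quat[X]) : Prop :=
  ∀ R : ℝ[X], 0 < R.natDegree → ¬ R.map (algebraMap ℝ Quat) ∣ P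

instance : StarRing DQ where
  star := dconj
  star_involutive h := TrivSqZeroExt.ext (star_star h.fst) (star_star h.snd)
  star_mul x y := by
    refine TrivSqZeroExt.ext (star_mul x.fst y.fst) ?_
    rw [TrivSqZeroExt.snd_mul]
    change star (x * y).snd = _
    simp [dconj, TrivSqZeroExt.snd_mul, add_comm]
  star_add x y := TrivSqZeroExt.ext (star_add x.fst y.fst) (star_add x.snd y.snd)

namespace DQ

@[simp] lemma fst_star (h : DQ) : (star h).fst = star h.fst := rfl

@[simp] lemma snd_star (h : DQ) : (star h).snd = star h.snd := rfl

lemma star_comm_self (h : DQ) : Commute (star h) h := by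
  refine TrivSqZeroExt.ext ?_ ?_
  · simp [TrivSqZeroExt.fst_mul, Quaternion.self_mul_star, Quaternion.star_mul_self]
  · simp only [TrivSqZeroExt.snd_mul, smul_eq_mul, op_smul_eq_mul, fst_star, snd_star]
    have h₁ := Quaternion.self_add_star' (star h.fst * h.snd)
    have h₂ := Quaternion.self_add_star' (h.fst * star h.snd)
    rw [star_mul, star_star] at h₁ h₂
    rw [h₁, h₂]
    simp [Quaternion.re_mul]

lemma isUnit_of_fst_ne_zero {h : DQ} (hh : h.fst ≠ 0) : IsUnit h :=
  TrivSqZeroExt.isUnit_iff_isUnit_fst.2 hh.isUnit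

end DQ

@[simp] lemma fst_realToDQ (r : ℝ) : (realToDQ r).fst = (r : Quat) := rfl

lemma realToDQ_injective : Function.Injective realToDQ := fun _ _ h =>
  Quaternion.coe_injective (congrArg TrivSqZeroExt.fst h)

lemma star_realToDQ (r : ℝ) : star (realToDQ r) = realToDQ r :=
  TrivSqZeroExt.ext (Quaternion.star_coe r) (star_zero _)

lemma commute_realToDQ (r : ℝ) (h : DQ) : Commute (realToDQ r) h :=
  Algebra.commutes r h

lemma commute_map_realToDQ (M : ℝ[X]) (p : DQ[X]) : Commute (M.map realToDQ) p := by
  induction M using Polynomial.induction_on' with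
  | add M N hM hN => rw [Polynomial.map_add]; exact hM.add_left hN
  | monomial n r =>
    rw [map_monomial, ← C_mul_X_pow_eq_monomial]
    exact Commute.mul_left (Algebra.commutes r p) ((commute_X p).pow_left n)

lemma coeff_pconj (p : DQ[X]) (n : ℕ) : (pconj p).coeff n = star (p.coeff n) := by
  rw [pconj, Polynomial.sum_def, finsetSum_coeff]
  simp_rw [coeff_C_mul_X_pow]
  rw [Finset.sum_eq_single n (fun m _ hm => if_neg hm.symm) (fun hn => ?_), if_pos rfl]
  · rfl
  · rw [if_pos rfl, notMem_support_iff.1 hn]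
    exact star_zero DQ

lemma pconj_add (p q : DQ[X]) : pconj (p + q) = pconj p + pconj q := by
  ext n : 1
  simp only [coeff_pconj, coeff_add, star_add]

lemma pconj_mul (p q : DQ[X]) : pconj (p * q) = pconj q * pconj p := by
  ext n : 1
  simp only [coeff_pconj, coeff_mul, star_sum, star_mul]
  rw [← Finset.Nat.sum_antidiagonal_swap]
  rfl

lemma pconj_X_sub_C (k : DQ) : pconj (X - C k) = X - C (star k) := by
  ext n : 1
  rw [coeff_pconj]
  rcases n with _ | _ | n <;> simp [coeff_X, coeff_C]

lemma pconj_C_mul_X_add_C (a b : DQ) : pconj (C a * X + C b) = C (star a) * X + C (star b) := by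
  ext n : 1
  rw [coeff_pconj]
  rcases n with _ | _ | n <;> simp [coeff_X, coeff_C]

lemma pconj_map_realToDQ (M : ℝ[X]) : pconj (M.map realToDQ) = M.map realToDQ := by
  ext n : 1
  rw [coeff_pconj, coeff_map, star_realToDQ]

namespace Polynomial

variable {R : Type*} [Ring R]

lemma X_sub_C_mul_X_sub_C (k h : R) :
    (X - C k) * (X - C h) = X ^ 2 + C (-(k + h)) * X + C (k * h) := by
  rw [sub_mul, mul_sub, mul_sub, X_mul_C, ← C_mul, C_neg, C_add]
  noncomm_ring

lemma C_mul_X_add_C_mul_C_mul_X_add_C (a b c d : R) :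
    (C a * X + C b) * (C c * X + C d) = C (a * c) * X ^ 2 + C (a * d + b * c) * X + C (b * d) := by
  simp only [← monomial_one_one_eq_X, ← monomial_zero_left, monomial_pow, monomial_mul_monomial,
    add_mul, mul_add, map_add, one_pow, mul_one, one_mul]
  abel

lemma X_sq_add_C_mul_X_add_C_inj {u v u' v' : R} :
    X ^ 2 + C u * X + C v = X ^ 2 + C u' * X + C v' ↔ u = u' ∧ v = v' := by
  refine ⟨fun h => ⟨?_, ?_⟩, fun ⟨hu, hv⟩ => hu ▸ hv ▸ rfl⟩
  · simpa using congrArg (coeff · 1) h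
  · simpa using congrArg (coeff · 0) h

lemma C_mul_X_sq_add_C_mul_X_add_C_inj {p q r p' q' r' : R} :
    C p * X ^ 2 + C q * X + C r = C p' * X ^ 2 + C q' * X + C r' ↔ p = p' ∧ q = q' ∧ r = r' := by
  refine ⟨fun h => ⟨?_, ?_, ?_⟩, by rintro ⟨rfl, rfl, rfl⟩; rfl⟩
  · simpa using congrArg (coeff · 2) h
  · simpa using congrArg (coeff · 1) h
  · simpa using congrArg (coeff · 0) h

lemma X_sq_add_C_mul_X_add_C_mul_C (u v g : R) :
    (X ^ 2 + C u * X + C v) * C g = C g * X ^ 2 + C (u * g) * X + C (v * g) := by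
  simp only [← monomial_one_one_eq_X, ← monomial_zero_left, monomial_pow, monomial_mul_monomial,
    add_mul, one_pow, mul_one, one_mul, zero_add, add_zero]

lemma Monic.eq_X_sq_add_C_mul_X_add_C {p : R[X]} (hp : p.Monic) (hdeg : p.natDegree = 2) :
    p = X ^ 2 + C (p.coeff 1) * X + C (p.coeff 0) := by
  ext n : 1
  rcases n with _ | _ | _ | n
  · simp
  · simp
  · simpa [coeff_X] using hdeg ▸ hp.coeff_natDegree
  · simp [coeff_eq_zero_of_natDegree_lt (show p.natDegree < n + 3 by omega)]

lemma X_sq_add_C_mul_X_add_C_eq_X_sub_C_mul_X_sub_C_iff {c₁ c₀ k h : R} :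
    X ^ 2 + C c₁ * X + C c₀ = (X - C k) * (X - C h) ↔ k = -c₁ - h ∧ h * h + c₁ * h + c₀ = 0 := by
  rw [X_sub_C_mul_X_sub_C, X_sq_add_C_mul_X_add_C_inj]
  constructor
  · rintro ⟨rfl, rfl⟩
    constructor <;> noncomm_ring
  · rintro ⟨rfl, hroot⟩
    refine ⟨by noncomm_ring, ?_⟩
    rw [← sub_eq_zero, ← hroot]
    noncomm_ring

lemma Monic.eq_C_of_natDegree_mul_le {p q : R[X]} (hp : p.Monic)
    (h : (p * q).natDegree ≤ p.natDegree) : q = C (q.coeff 0) := by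
  by_cases hq : q = 0
  · simp [hq]
  · rw [hp.natDegree_mul' hq] at h
    exact eq_C_of_natDegree_le_zero (by omega)

end Polynomial

lemma map_realToDQ_eq {M : ℝ[X]} (hM : M.Monic) (hdM : M.natDegree = 2) :
    M.map realToDQ = X ^ 2 + C (realToDQ (M.coeff 1)) * X + C (realToDQ (M.coeff 0)) := by
  conv_lhs => rw [hM.eq_X_sq_add_C_mul_X_add_C hdM]
  simp

lemma mul_mul_pconj_mul {p q : DQ[X]} {N : ℝ[X]} (hq : q * pconj q = N.map realToDQ) :
    p * q * pconj (p * q) = N.map realToDQ * (p * pconj p) := by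
  rw [pconj_mul, ← mul_assoc, mul_assoc p, hq, ← (commute_map_realToDQ N p).eq, mul_assoc]

lemma isMotionPoly_X_sub_C_iff (k : DQ) :
    IsMotionPoly (X - C k) ↔ ∃ N : ℝ[X], (X - C k) * (X - C (star k)) = N.map realToDQ := by
  rw [IsMotionPoly, pconj_X_sub_C, leadingCoeff_X_sub_C]
  refine ⟨fun ⟨⟨N, _, hN⟩, _⟩ => ⟨N, hN⟩, fun ⟨N, hN⟩ => ⟨⟨N, ?_, hN⟩, isUnit_one⟩⟩
  rintro rfl
  rw [Polynomial.map_zero] at hN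
  exact ((monic_X_sub_C k).mul (monic_X_sub_C _)).ne_zero hN

lemma monic_and_natDegree_of_X_sub_C_mul_X_sub_C_star {k : DQ} {N : ℝ[X]}
    (hN : (X - C k) * (X - C (star k)) = N.map realToDQ) : N.Monic ∧ N.natDegree = 2 := by
  have hmonic : ((X - C k) * (X - C (star k))).Monic := (monic_X_sub_C k).mul (monic_X_sub_C _)
  refine ⟨monic_of_injective realToDQ_injective (hN ▸ hmonic), ?_⟩
  rw [← natDegree_map_eq_of_injective realToDQ_injective, ← hN,
    (monic_X_sub_C k).natDegree_mul (monic_X_sub_C _), natDegree_X_sub_C, natDegree_X_sub_C]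

lemma X_sub_C_mul_X_sub_C_star_eq_iff {M : ℝ[X]} (hM : M.Monic) (hdM : M.natDegree = 2) (h : DQ) :
    (X - C h) * (X - C (star h)) = M.map realToDQ ↔
      h + star h = -realToDQ (M.coeff 1) ∧ h * star h = realToDQ (M.coeff 0) := by
  rw [X_sub_C_mul_X_sub_C, map_realToDQ_eq hM hdM, X_sq_add_C_mul_X_add_C_inj, neg_eq_iff_eq_neg]

lemma X_sub_C_mul_X_sub_C_star_eq_of_factor {P : DQ[X]} {k h : DQ} {M M' : ℝ[X]} (hM : M.Monic)
    (hfac : P = (X - C k) * (X - C h)) (hh : (X - C h) * (X - C (star h)) = M.map realToDQ)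
    (hnorm : P * pconj P = (M' * M).map realToDQ) :
    (X - C k) * (X - C (star k)) = M'.map realToDQ := by
  rw [← pconj_X_sub_C] at hh ⊢
  apply (hM.map realToDQ).isRegular.left
  dsimp only
  rw [← mul_mul_pconj_mul hh, ← hfac, hnorm, Polynomial.map_mul, (commute_map_realToDQ M' _).eq]

lemma eq_X_sub_C_mul_X_sub_C_iff_of_norm_eq {M : ℝ[X]} (hM : M.Monic) (hdM : M.natDegree = 2)
    {c₁ c₀ k h : DQ} (hh : (X - C h) * (X - C (star h)) = M.map realToDQ) :
    X ^ 2 + C c₁ * X + C c₀ = (X - C k) * (X - C h) ↔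
      k = -c₁ - h ∧ (c₁ - realToDQ (M.coeff 1)) * h + (c₀ - realToDQ (M.coeff 0)) = 0 := by
  obtain ⟨hsum, hprod⟩ := (X_sub_C_mul_X_sub_C_star_eq_iff hM hdM h).1 hh
  have hroot : h * h + realToDQ (M.coeff 1) * h + realToDQ (M.coeff 0) = 0 := by
    rw [← neg_neg (realToDQ _), ← hsum, ← hprod, ← (DQ.star_comm_self h).eq]
    noncomm_ring
  have hremainder : h * h + c₁ * h + c₀ =
      (c₁ - realToDQ (M.coeff 1)) * h + (c₀ - realToDQ (M.coeff 0)) := by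
    rw [← sub_zero (h * h + c₁ * h + c₀), ← hroot]
    noncomm_ring
  rw [X_sq_add_C_mul_X_add_C_eq_X_sub_C_mul_X_sub_C_iff, hremainder]

lemma neg_inv_mul_add_star_eq_and_mul_star_eq {A : Type*} [Ring A] [StarRing A] (u : Aˣ) {b n₁ n₀ : A}
    (hn₁ : Commute n₁ ↑u⁻¹) (hn₀ : Commute n₀ ↑u⁻¹)
    (hb₁ : ↑u * star b + b * star ↑u = n₁ * (↑u * star ↑u))
    (hb₀ : b * star b = n₀ * (↑u * star ↑u)) :
    -(↑u⁻¹ * b) + star (-(↑u⁻¹ * b)) = -n₁ ∧ -(↑u⁻¹ * b) * star (-(↑u⁻¹ * b)) = n₀ := by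
  have hstar : star (↑u : A) * star ↑u⁻¹ = 1 := by rw [← star_mul, Units.inv_mul, star_one]
  have hconj : ∀ {n : A}, Commute n ↑u⁻¹ → ↑u⁻¹ * (n * (↑u * star ↑u)) * star ↑u⁻¹ = n := by
    intro n hn
    simp only [← mul_assoc]
    rw [← hn.eq, mul_assoc n, Units.inv_mul, mul_one, mul_assoc, hstar, mul_one]
  constructor
  · rw [← hconj hn₁, ← hb₁, star_neg, star_mul]
    simp only [mul_add, add_mul, mul_assoc, hstar, Units.inv_mul_cancel_left, mul_one]
    abel
  · rw [← hconj hn₀, ← hb₀, star_neg, star_mul, neg_mul_neg]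
    simp only [mul_assoc]

lemma remainder_relations_of_mul_pconj_eq {M M' : ℝ[X]} (hM : M.Monic) (hdM : M.natDegree = 2) {a b : DQ}
    (hnorm : (M.map realToDQ + (C a * X + C b)) * pconj (M.map realToDQ + (C a * X + C b)) =
      (M' * M).map realToDQ) :
    a * star b + b * star a = realToDQ (M.coeff 1) * (a * star a) ∧
      b * star b = realToDQ (M.coeff 0) * (a * star a) := by
  have hL : (C a * X + C b) * pconj (C a * X + C b) =
      C (a * star a) * X ^ 2 + C (a * star b + b * star a) * X + C (b * star b) := by
    rw [pconj_C_mul_X_add_C, C_mul_X_add_C_mul_C_mul_X_add_C]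
  have hcomm := commute_map_realToDQ M (C a * X + C b)
  have hNmonic : (M.map realToDQ).Monic := hM.map _
  have hNdeg : (M.map realToDQ).natDegree = 2 := by
    rw [natDegree_map_eq_of_injective realToDQ_injective, hdM]
  have hN := map_realToDQ_eq hM hdM
  rw [pconj_add, pconj_map_realToDQ, Polynomial.map_mul,
    (commute_map_realToDQ M' _).eq] at hnorm
  generalize M.map realToDQ = N at hnorm hcomm hNmonic hNdeg hN
  generalize C a * X + C b = L at hnorm hcomm hL
  have hdiv : L * pconj L = N * (M'.map realToDQ - (N + L + pconj L)) := by
    rw [mul_sub, ← hnorm, add_mul, mul_add, mul_add, mul_add, mul_add, ← hcomm.eq]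
    abel
  rw [hNmonic.eq_C_of_natDegree_mul_le (q := M'.map realToDQ - (N + L + pconj L))
    (by rw [← hdiv, hL, hNdeg]; exact natDegree_quadratic_le), hL] at hdiv
  generalize (M'.map realToDQ - (N + L + pconj L)).coeff 0 = g at hdiv
  rw [hN, X_sq_add_C_mul_X_add_C_mul_C, C_mul_X_sq_add_C_mul_X_add_C_inj] at hdiv
  obtain ⟨rfl, h₁, h₀⟩ := hdiv
  exact ⟨h₁, h₀⟩

lemma isUnit_sub_of_noRealFactor {M : ℝ[X]} (hM : M.Monic) (hdM : M.natDegree = 2) {c₁ c₀ : DQ}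
    (hprim : NoRealFactor (primal (X ^ 2 + C c₁ * X + C c₀)))
    (hb : (c₀ - realToDQ (M.coeff 0)) * star (c₀ - realToDQ (M.coeff 0)) =
      realToDQ (M.coeff 0) * ((c₁ - realToDQ (M.coeff 1)) * star (c₁ - realToDQ (M.coeff 1)))) :
    IsUnit (c₁ - realToDQ (M.coeff 1)) := by
  refine DQ.isUnit_of_fst_ne_zero fun ha => hprim M (by omega) ⟨1, ?_⟩
  have hb' : (c₀ - realToDQ (M.coeff 0)).fst = 0 := by
    have := congrArg TrivSqZeroExt.fst hb
    simp only [TrivSqZeroExt.fst_mul, DQ.fst_star, ha, zero_mul, mul_zero] at this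
    exact (mul_eq_zero.1 this).elim id star_eq_zero.1
  have h₁ : c₁.fst = (M.coeff 1 : Quat) := by simpa [sub_eq_zero] using ha
  have h₀ : c₀.fst = (M.coeff 0 : Quat) := by simpa [sub_eq_zero] using hb'
  rw [mul_one]
  conv_rhs => rw [hM.eq_X_sq_add_C_mul_X_add_C hdM]
  simp [primal, h₁, h₀]

theorem existsUnique_factorization_of_norm {P : DQ[X]} (hmonic : P.Monic) (hdeg : P.natDegree = 2)
    (hprim : NoRealFactor (primal P)) {M M' : ℝ[X]} (hM : M.Monic) (hdM : M.natDegree = 2)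
    (hnorm : P * pconj P = (M' * M).map realToDQ) :
    ∃! hk : DQ × DQ, P = (X - C hk.1) * (X - C hk.2) ∧
      (X - C hk.2) * (X - C (star hk.2)) = M.map realToDQ := by
  have hP := hmonic.eq_X_sq_add_C_mul_X_add_C hdeg
  generalize P.coeff 1 = c₁ at hP
  generalize P.coeff 0 = c₀ at hP
  subst hP
  have hPM : X ^ 2 + C c₁ * X + C c₀ = M.map realToDQ +
      (C (c₁ - realToDQ (M.coeff 1)) * X + C (c₀ - realToDQ (M.coeff 0))) := by
    rw [map_realToDQ_eq hM hdM, C_sub, C_sub, sub_mul]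
    abel
  rw [hPM] at hnorm
  obtain ⟨hb₁, hb₀⟩ := remainder_relations_of_mul_pconj_eq hM hdM hnorm
  obtain ⟨u, hu⟩ := isUnit_sub_of_noRealFactor hM hdM hprim hb₀
  rw [← hu] at hb₁ hb₀
  obtain ⟨hsum, hprod⟩ := neg_inv_mul_add_star_eq_and_mul_star_eq u (commute_realToDQ _ _)
    (commute_realToDQ _ _) hb₁ hb₀
  set h₀ := -(↑u⁻¹ * (c₀ - realToDQ (M.coeff 0)))
  have hnorm₀ : (X - C h₀) * (X - C (star h₀)) = M.map realToDQ :=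
    (X_sub_C_mul_X_sub_C_star_eq_iff hM hdM _).2 ⟨hsum, hprod⟩
  refine ⟨(-c₁ - h₀, h₀), ⟨?_, hnorm₀⟩, ?_⟩
  · refine (eq_X_sub_C_mul_X_sub_C_iff_of_norm_eq hM hdM hnorm₀).2 ⟨rfl, ?_⟩
    rw [← hu, mul_neg, Units.mul_inv_cancel_left, neg_add_cancel]
  · rintro ⟨k, h⟩ ⟨hfac, hh⟩
    dsimp only at hfac hh
    obtain ⟨rfl, hroot⟩ := (eq_X_sub_C_mul_X_sub_C_iff_of_norm_eq hM hdM hh).1 hfac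
    rw [← hu, add_eq_zero_iff_eq_neg] at hroot
    have hh₀ : h = h₀ := by rw [← Units.inv_mul_cancel_left u h, hroot, mul_neg]
    rw [hh₀]

lemma X_sub_C_mul_X_sub_C_star_eq_or_of_isMotionPoly {P : DQ[X]} {k h : DQ} {M₁ M₂ : ℝ[X]}
    (hM₁ : M₁.Monic) (hd₁ : M₁.natDegree = 2) (hirr₁ : Irreducible M₁)
    (hfac : P = (X - C k) * (X - C h)) (hk : IsMotionPoly (X - C k)) (hh : IsMotionPoly (X - C h))
    (hnorm : P * pconj P = (M₁ * M₂).map realToDQ) :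
    (X - C h) * (X - C (star h)) = M₁.map realToDQ ∨
      (X - C h) * (X - C (star h)) = M₂.map realToDQ := by
  obtain ⟨N₁, hN₁⟩ := (isMotionPoly_X_sub_C_iff k).1 hk
  obtain ⟨N₂, hN₂⟩ := (isMotionPoly_X_sub_C_iff h).1 hh
  obtain ⟨hN₁m, hN₁d⟩ := monic_and_natDegree_of_X_sub_C_mul_X_sub_C_star hN₁
  obtain ⟨hN₂m, hN₂d⟩ := monic_and_natDegree_of_X_sub_C_mul_X_sub_C_star hN₂
  have hN : M₁ * M₂ = N₂ * N₁ := by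
    apply map_injective _ realToDQ_injective
    rw [← hnorm, Polynomial.map_mul, hfac, mul_mul_pconj_mul (by rwa [pconj_X_sub_C]),
      pconj_X_sub_C, hN₁]
  rcases hirr₁.prime.dvd_or_dvd (Dvd.intro _ hN) with hdvd | hdvd
  · exact Or.inl (eq_of_monic_of_dvd_of_natDegree_le hM₁ hN₂m hdvd (by omega) ▸ hN₂)
  · rw [eq_of_monic_of_dvd_of_natDegree_le hM₁ hN₁m hdvd (by omega), mul_comm] at hN
    exact Or.inr (mul_right_cancel₀ hM₁.ne_zero hN ▸ hN₂)

theorem stmt14_general (C : DQ[X]) (hmonic : C.Monic) (hdeg : C.natDegree = 2)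
    (hprim : NoRealFactor (primal C))
    (M₁ M₂ : ℝ[X]) (hM₁ : M₁.Monic) (hM₂ : M₂.Monic)
    (hd₁ : M₁.natDegree = 2) (hd₂ : M₂.natDegree = 2)
    (hirr₁ : Irreducible M₁) (hne : M₁ ≠ M₂)
    (hnorm : C * pconj C = (M₁ * M₂).map realToDQ) :
    ∃ a b : DQ × DQ, a ≠ b ∧
      {hp : DQ × DQ |
          C = (X - Polynomial.C hp.1) * (X - Polynomial.C hp.2) ∧
          IsMotionPoly (X - Polynomial.C hp.1) ∧
          IsMotionPoly (X - Polynomial.C hp.2)} = {a, b} ∧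
      (X - Polynomial.C a.1) * (X - Polynomial.C (dconj a.1)) = M₁.map realToDQ ∧
      (X - Polynomial.C b.1) * (X - Polynomial.C (dconj b.1)) = M₂.map realToDQ := by
  have hnorm' : C * pconj C = (M₂ * M₁).map realToDQ := by rw [hnorm, mul_comm]
  obtain ⟨a, ⟨ha, ha₂⟩, ha_uniq⟩ :=
    existsUnique_factorization_of_norm hmonic hdeg hprim hM₂ hd₂ hnorm
  obtain ⟨b, ⟨hb, hb₂⟩, hb_uniq⟩ :=
    existsUnique_factorization_of_norm hmonic hdeg hprim hM₁ hd₁ hnorm'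
  have ha₁ := X_sub_C_mul_X_sub_C_star_eq_of_factor hM₂ ha ha₂ hnorm
  have hb₁ := X_sub_C_mul_X_sub_C_star_eq_of_factor hM₁ hb hb₂ hnorm'
  refine ⟨a, b, ?_, Set.ext fun p => ⟨fun ⟨hp, hm₁, hm₂⟩ => ?_, ?_⟩, ha₁, hb₁⟩
  · rintro rfl
    exact hne (map_injective _ realToDQ_injective (ha₁.symm.trans hb₁))
  · rcases X_sub_C_mul_X_sub_C_star_eq_or_of_isMotionPoly hM₁ hd₁ hirr₁ hp hm₁ hm₂ hnorm with h | h
    · exact Or.inr (hb_uniq p ⟨hp, h⟩)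
    · exact Or.inl (ha_uniq p ⟨hp, h⟩)
  · rintro (rfl | rfl)
    · exact ⟨ha, (isMotionPoly_X_sub_C_iff _).2 ⟨_, ha₁⟩, (isMotionPoly_X_sub_C_iff _).2 ⟨_, ha₂⟩⟩
    · exact ⟨hb, (isMotionPoly_X_sub_C_iff _).2 ⟨_, hb₁⟩, (isMotionPoly_X_sub_C_iff _).2 ⟨_, hb₂⟩⟩

/-- A monic quadratic motion polynomial C, with primal part having no
nonconstant real factor and norm polynomial C·C̄ = M₁·M₂ a product of two distinct
monic irreducible real quadratics, admits exactly two factorizations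
`C = (t − h₁)(t − h₂)` into monic linear motion polynomials; for one of them
`(t − h₁)(t − h̄₁) = M₁`, for the other `(t − h₁)(t − h̄₁) = M₂`. -/
theorem stmt14 (C : DQ[X]) (hmonic : C.Monic) (hdeg : C.natDegree = 2)
    (hmp : IsMotionPoly C) (hprim : NoRealFactor (primal C))
    (M₁ M₂ : ℝ[X]) (hM₁ : M₁.Monic) (hM₂ : M₂.Monic)
    (hd₁ : M₁.natDegree = 2) (hd₂ : M₂.natDegree = 2)
    (hirr₁ : Irreducible M₁) (hirr₂ : Irreducible M₂) (hne : M₁ ≠ M₂)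
    (hnorm : C * pconj C = (M₁ * M₂).map realToDQ) :
    ∃ a b : DQ × DQ, a ≠ b ∧
      {hp : DQ × DQ |
          C = (X - Polynomial.C hp.1) * (X - Polynomial.C hp.2) ∧
          IsMotionPoly (X - Polynomial.C hp.1) ∧
          IsMotionPoly (X - Polynomial.C hp.2)} = {a, b} ∧
      (X - Polynomial.C a.1) * (X - Polynomial.C (dconj a.1)) = M₁.map realToDQ ∧
      (X - Polynomial.C b.1) * (X - Polynomial.C (dconj b.1)) = M₂.map realToDQ :=
  stmt14_general C hmonic hdeg hprim M₁ M₂ hM₁ hM₂ hd₁ hd₂ hirr₁ hne hnorm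
end
end
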